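/- Let ((S,T),(U,V)) be a twin cotorsion pair on an extriangulated category B, and let B ∈ B. Construct B^+ via a commutative diagram of conflations obtained from conflations V_B ↣ U_B ↠ B (U_B ∈ U, V_B ∈ V) and U_B ↣ T^U ↠ S^U (T^U ∈ T, S^U ∈ S) by axiom (ET4), yielding a conflation B ↣ B^+ ↠ S^U. Then B ↣ B^+ ↠ S^U is a reflection sequence for B. Dually, the conflation V_T ↣ B^- ↠ B constructed from conflations B ↣ T^B ↠ S^B and V_T ↣ U_T ↠ T^B by (ET4)^op is a coreflection sequence for B. -/

import Mathlib

namespace ExtriHearts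

open CategoryTheory CategoryTheory.Limits Opposite

attribute [local instance] CategoryTheory.Limits.hasBinaryBiproducts_of_finite_biproducts

universe v u v₂ u₂

section IdealQuotient

variable {D : Type u₂} [Category.{v₂} D] [Preadditive D]

/-- The subgroup of morphisms `X ⟶ Y` generated by those factoring through an object of `W`. -/
def wIdeal (W : Set D) (X Y : D) : AddSubgroup (X ⟶ Y) :=
  AddSubgroup.closure {f : X ⟶ Y | ∃ Z ∈ W, ∃ p : X ⟶ Z, ∃ q : Z ⟶ Y, f = p ≫ q}

/-- The hom relation on `D` identifying morphisms whose difference lies in the ideal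
generated by morphisms factoring through an object of `W`.  (For an additively closed
subcategory `W` this is the usual relation "`f - g` factors through an object of `W`".) -/
def wRel (W : Set D) : HomRel D := fun {X Y} f g => f - g ∈ wIdeal W X Y

lemma comp_left_mem_wIdeal (W : Set D) {X Y Z : D} (f : X ⟶ Y) {g : Y ⟶ Z}
    (hg : g ∈ wIdeal W Y Z) : f ≫ g ∈ wIdeal W X Z := by
  have hle : wIdeal W Y Z ≤ (wIdeal W X Z).comap (Preadditive.leftComp Z f) := by
    rw [wIdeal, AddSubgroup.closure_le]
    rintro g ⟨Z₀, hZ₀, p, q, rfl⟩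
    exact AddSubgroup.subset_closure ⟨Z₀, hZ₀, f ≫ p, q, by
      simp [Preadditive.leftComp]⟩
  simpa [Preadditive.leftComp] using hle hg

lemma comp_right_mem_wIdeal (W : Set D) {X Y Z : D} {f : X ⟶ Y} (g : Y ⟶ Z)
    (hf : f ∈ wIdeal W X Y) : f ≫ g ∈ wIdeal W X Z := by
  have hle : wIdeal W X Y ≤ (wIdeal W X Z).comap (Preadditive.rightComp X g) := by
    rw [wIdeal, AddSubgroup.closure_le]
    rintro f ⟨Z₀, hZ₀, p, q, rfl⟩
    exact AddSubgroup.subset_closure ⟨Z₀, hZ₀, p, q ≫ g, by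
      simp [Preadditive.rightComp]⟩
  simpa [Preadditive.rightComp] using hle hf

instance wRel_congruence (W : Set D) : Congruence (wRel W) where
  equivalence :=
    { refl := fun f => by
        show f - f ∈ wIdeal W _ _
        simp only [sub_self]
        exact zero_mem _
      symm := fun {f g} h => by
        have h' : f - g ∈ wIdeal W _ _ := h
        show g - f ∈ wIdeal W _ _
        simpa only [neg_sub] using neg_mem h'
      trans := fun {f g h} h₁ h₂ => by
        have h₁' : f - g ∈ wIdeal W _ _ := h₁
        have h₂' : g - h ∈ wIdeal W _ _ := h₂
        show f - h ∈ wIdeal W _ _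
        simpa only [sub_add_sub_cancel] using add_mem h₁' h₂' }
  comp_left := fun {X Y Z} f {g g'} h => by
    have h' : g - g' ∈ wIdeal W _ _ := h
    show f ≫ g - f ≫ g' ∈ wIdeal W _ _
    simpa only [← Preadditive.comp_sub] using comp_left_mem_wIdeal W f h'
  comp_right := fun {X Y Z} {f f'} g h => by
    have h' : f - f' ∈ wIdeal W _ _ := h
    show f ≫ g - f' ≫ g ∈ wIdeal W _ _
    simpa only [← Preadditive.sub_comp] using comp_right_mem_wIdeal W g h'

/-- The quotient of a preadditive category by (the ideal generated by) the morphisms factoring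
through a class of objects `W`. -/
abbrev QuotCat (W : Set D) := CategoryTheory.Quotient (wRel W)

/-- The canonical quotient functor. -/
abbrev toQuot (W : Set D) : D ⥤ QuotCat W := Quotient.functor _

instance quotCatPreadditive (W : Set D) : Preadditive (QuotCat W) :=
  Quotient.preadditive _ (fun X Y f₁ f₂ g₁ g₂ h₁ h₂ => by
    have h₁' : f₁ - f₂ ∈ wIdeal W X Y := h₁
    have h₂' : g₁ - g₂ ∈ wIdeal W X Y := h₂
    show f₁ + g₁ - (f₂ + g₂) ∈ wIdeal W X Y
    have heq : f₁ + g₁ - (f₂ + g₂) = f₁ - f₂ + (g₁ - g₂) := by abel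
    rw [heq]
    exact add_mem h₁' h₂')

end IdealQuotient

section ExtCat

/-- The data of an additive `Ab`-valued bifunctor together with a realization predicate:
`realize δ x y` means that the 3-term sequence `A --x--> X --y--> C` realizes the
`E`-extension `δ ∈ E(C,A)`, i.e. belongs to the equivalence class `s(δ)`. -/
structure PreExtStruct (B : Type u) [Category.{v} B] [Preadditive B] where
  /-- The additive bifunctor `E : Bᵒᵖ × B → Ab`. -/
  E : Bᵒᵖ ⥤ B ⥤ AddCommGrpCat.{v}

namespace PreExtStruct

variable {B : Type u} [Category.{v} B] [Preadditive B]

/-- The abelian group `E(C,A)` of `E`-extensions of `C` by `A`. -/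
abbrev Ext (σ : PreExtStruct B) (C A : B) : AddCommGrpCat.{v} := (σ.E.obj (op C)).obj A

/-- `a_* δ`, the pushforward of an `E`-extension along `a : A ⟶ A'`. -/
def push (σ : PreExtStruct B) {C A A' : B} (a : A ⟶ A') (δ : σ.Ext C A) : σ.Ext C A' :=
  (σ.E.obj (op C)).map a δ

/-- `c^* δ`, the pullback of an `E`-extension along `c : C' ⟶ C`. -/
def pull (σ : PreExtStruct B) {C' C A : B} (c : C' ⟶ C) (δ : σ.Ext C A) : σ.Ext C' A :=
  (σ.E.map c.op).app A δ

/-- The direct sum `δ ⊕ δ'` of two `E`-extensions, i.e. the element of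
`E(C ⊞ C', A ⊞ A')` corresponding to `(δ, 0, 0, δ')`. -/
noncomputable def sumExt (σ : PreExtStruct B) [HasBinaryBiproducts B] {C C' A A' : B}
    (δ : σ.Ext C A) (δ' : σ.Ext C' A') : σ.Ext (C ⊞ C') (A ⊞ A') :=
  σ.push biprod.inl (σ.pull biprod.fst δ) + σ.push biprod.inr (σ.pull biprod.snd δ')

end PreExtStruct

/-- An *extriangulated category* structure `(E, s)` on an additive category `B`, consisting of
an additive bifunctor `E : Bᵒᵖ × B → Ab` and an additive realization `s` of `E` (encoded by the
predicate `realize`), subject to the axioms (ET1), (ET2), (ET3), (ET3)ᵒᵖ, (ET4), (ET4)ᵒᵖ of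
Nakaoka–Palu. -/
structure ExtStruct (B : Type u) [Category.{v} B] [Preadditive B] [HasFiniteBiproducts B]
    extends PreExtStruct B where
  /-- (ET1) `E` is additive in the second variable. -/
  additive_fst : ∀ Cop : Bᵒᵖ, (E.obj Cop).Additive
  /-- (ET1) `E` is additive in the first variable. -/
  additive_snd : ∀ A : B, (E.flip.obj A).Additive
  /-- `realize δ x y` means the sequence `A --x--> X --y--> C` realizes `δ`, i.e. it belongs to
  the equivalence class `s(δ)`. -/
  realize : ∀ ⦃A C : B⦄, toPreExtStruct.Ext C A → ∀ ⦃X : B⦄, (A ⟶ X) → (X ⟶ C) → Prop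
  /-- Every `E`-extension is realized by some sequence. -/
  realize_ex : ∀ ⦃A C : B⦄ (δ : toPreExtStruct.Ext C A),
      ∃ (X : B) (x : A ⟶ X) (y : X ⟶ C), realize δ x y
  /-- `s(δ)` is closed under the equivalence of sequences. -/
  realize_iso : ∀ ⦃A C X X' : B⦄ (δ : toPreExtStruct.Ext C A) (x : A ⟶ X) (y : X ⟶ C)
      (b : X ≅ X'), realize δ x y → realize δ (x ≫ b.hom) (b.inv ≫ y)
  /-- Any two realizations of `δ` are equivalent sequences. -/
  realize_unique : ∀ ⦃A C X X' : B⦄ (δ : toPreExtStruct.Ext C A) (x : A ⟶ X) (y : X ⟶ C)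
      (x' : A ⟶ X') (y' : X' ⟶ C), realize δ x y → realize δ x' y' →
      ∃ b : X ≅ X', x ≫ b.hom = x' ∧ b.hom ≫ y' = y
  /-- (ET2)(∗) Any morphism of `E`-extensions is realized by a morphism of sequences. -/
  realize_map : ∀ ⦃A C A' C' X X' : B⦄ (δ : toPreExtStruct.Ext C A) (δ' : toPreExtStruct.Ext C' A')
      (x : A ⟶ X) (y : X ⟶ C) (x' : A' ⟶ X') (y' : X' ⟶ C') (a : A ⟶ A') (c : C ⟶ C'),
      realize δ x y → realize δ' x' y' →
      toPreExtStruct.push a δ = toPreExtStruct.pull c δ' →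
      ∃ b : X ⟶ X', x ≫ b = a ≫ x' ∧ y ≫ c = b ≫ y'
  /-- (ET2)(i) The split extension is realized by the split sequence. -/
  realize_zero : ∀ A C : B,
      realize (0 : toPreExtStruct.Ext C A) (biprod.inl : A ⟶ A ⊞ C) (biprod.snd : A ⊞ C ⟶ C)
  /-- (ET2)(ii) Realization is additive. -/
  realize_sum : ∀ ⦃A C A' C' X X' : B⦄ (δ : toPreExtStruct.Ext C A)
      (δ' : toPreExtStruct.Ext C' A') (x : A ⟶ X) (y : X ⟶ C) (x' : A' ⟶ X') (y' : X' ⟶ C'),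
      realize δ x y → realize δ' x' y' →
      realize (toPreExtStruct.sumExt δ δ') (biprod.map x x') (biprod.map y y')
  /-- (ET3) -/
  et3 : ∀ ⦃A C A' C' X X' : B⦄ (δ : toPreExtStruct.Ext C A) (δ' : toPreExtStruct.Ext C' A')
      (x : A ⟶ X) (y : X ⟶ C) (x' : A' ⟶ X') (y' : X' ⟶ C'),
      realize δ x y → realize δ' x' y' → ∀ (a : A ⟶ A') (b : X ⟶ X'), x ≫ b = a ≫ x' →
      ∃ c : C ⟶ C', toPreExtStruct.push a δ = toPreExtStruct.pull c δ' ∧ y ≫ c = b ≫ y'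
  /-- (ET3)ᵒᵖ -/
  et3op : ∀ ⦃A C A' C' X X' : B⦄ (δ : toPreExtStruct.Ext C A) (δ' : toPreExtStruct.Ext C' A')
      (x : A ⟶ X) (y : X ⟶ C) (x' : A' ⟶ X') (y' : X' ⟶ C'),
      realize δ x y → realize δ' x' y' → ∀ (b : X ⟶ X') (c : C ⟶ C'), y ≫ c = b ≫ y' →
      ∃ a : A ⟶ A', toPreExtStruct.push a δ = toPreExtStruct.pull c δ' ∧ x ≫ b = a ≫ x'
  /-- (ET4) -/
  et4 : ∀ ⦃A B₀ D C F : B⦄ (δ : toPreExtStruct.Ext D A) (f : A ⟶ B₀) (f' : B₀ ⟶ D)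
      (δ' : toPreExtStruct.Ext F B₀) (g : B₀ ⟶ C) (g' : C ⟶ F),
      realize δ f f' → realize δ' g g' →
      ∃ (E₀ : B) (d : D ⟶ E₀) (e : E₀ ⟶ F) (h' : C ⟶ E₀) (δ'' : toPreExtStruct.Ext E₀ A),
        g ≫ h' = f' ≫ d ∧ h' ≫ e = g' ∧
        realize δ'' (f ≫ g) h' ∧ realize (toPreExtStruct.push f' δ') d e ∧
        toPreExtStruct.pull d δ'' = δ ∧ toPreExtStruct.push f δ'' = toPreExtStruct.pull e δ'
  /-- (ET4)ᵒᵖ -/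
  et4op : ∀ ⦃F C B₀ D A : B⦄ (δ' : toPreExtStruct.Ext B₀ F) (s : F ⟶ C) (t : C ⟶ B₀)
      (δ : toPreExtStruct.Ext A D) (u : D ⟶ B₀) (v : B₀ ⟶ A),
      realize δ' s t → realize δ u v →
      ∃ (E₀ : B) (e : F ⟶ E₀) (d : E₀ ⟶ D) (m : E₀ ⟶ C) (δ'' : toPreExtStruct.Ext A E₀),
        m ≫ t = d ≫ u ∧ e ≫ m = s ∧
        realize δ'' m (t ≫ v) ∧ realize (toPreExtStruct.pull u δ') e d ∧
        toPreExtStruct.push d δ'' = δ ∧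
        toPreExtStruct.pull v δ'' = toPreExtStruct.push e δ'

namespace ExtStruct

variable {B : Type u} [Category.{v} B] [Preadditive B] [HasFiniteBiproducts B] (σ : ExtStruct B)

/-- A sequence `A --x--> X --y--> C` is a conflation if it realizes some `E`-extension. -/
def Conflation {A X C : B} (x : A ⟶ X) (y : X ⟶ C) : Prop :=
  ∃ δ : σ.Ext C A, σ.realize δ x y

/-- `Cone(D₁, D₂)`: objects `X` admitting a conflation `D₁ ↣ D₂ ↠ X`. -/
def Cone (D₁ D₂ : Set B) : Set B :=
  {X | ∃ (A Y : B) (f : A ⟶ Y) (g : Y ⟶ X), A ∈ D₁ ∧ Y ∈ D₂ ∧ σ.Conflation f g}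

/-- `CoCone(D₁, D₂)`: objects `X` admitting a conflation `X ↣ D₁ ↠ D₂`. -/
def CoCone (D₁ D₂ : Set B) : Set B :=
  {X | ∃ (Y C : B) (f : X ⟶ Y) (g : Y ⟶ C), Y ∈ D₁ ∧ C ∈ D₂ ∧ σ.Conflation f g}

/-- `D₁ ∗ D₂`: objects `X` admitting a conflation `D₁ ↣ X ↠ D₂`. -/
def star (D₁ D₂ : Set B) : Set B :=
  {X | ∃ (A C : B) (f : A ⟶ X) (g : X ⟶ C), A ∈ D₁ ∧ C ∈ D₂ ∧ σ.Conflation f g}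

/-- `add(D₁ ∗ D₂)`: direct summands of objects of `D₁ ∗ D₂`. -/
def addStar (D₁ D₂ : Set B) : Set B :=
  {X | ∃ Y ∈ σ.star D₁ D₂, ∃ (s : X ⟶ Y) (r : Y ⟶ X), s ≫ r = 𝟙 X}

/-- An object `P` is projective if `E(P, −) = 0`. -/
def IsProj (P : B) : Prop := ∀ (A : B) (δ : σ.Ext P A), δ = 0

/-- An object `I` is injective if `E(−, I) = 0`. -/
def IsInj (I : B) : Prop := ∀ (C : B) (δ : σ.Ext C I), δ = 0

/-- The class of projective objects. -/
def projs : Set B := {P | σ.IsProj P}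

/-- `B` has enough projectives: every object admits a deflation from a projective. -/
def EnoughProj : Prop :=
  ∀ X : B, ∃ (P K : B) (i : K ⟶ P) (p : P ⟶ X), σ.IsProj P ∧ σ.Conflation i p

/-- `B` has enough injectives: every object admits an inflation into an injective. -/
def EnoughInj : Prop :=
  ∀ X : B, ∃ (I C : B) (i : X ⟶ I) (p : I ⟶ C), σ.IsInj I ∧ σ.Conflation i p

end ExtStruct

/-- A full additive subcategory (given as a class of objects), closed under isomorphisms and
direct summands. -/
structure AddClosed {B : Type u} [Category.{v} B] [Preadditive B] [HasFiniteBiproducts B]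
    (U : Set B) : Prop where
  zero_mem : ∀ Z : B, IsZero Z → Z ∈ U
  biprod_mem : ∀ X Y : B, X ∈ U → Y ∈ U → (X ⊞ Y) ∈ U
  summand_mem : ∀ X Y : B, Y ∈ U → ∀ (s : X ⟶ Y) (r : Y ⟶ X), s ≫ r = 𝟙 X → X ∈ U

namespace ExtStruct

variable {B : Type u} [Category.{v} B] [Preadditive B] [HasFiniteBiproducts B] (σ : ExtStruct B)

/-- A (complete) cotorsion pair `(U, V)` on an extriangulated category. -/
structure IsCotorsionPair (U V : Set B) : Prop where
  addU : AddClosed U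
  addV : AddClosed V
  ext_vanish : ∀ ⦃X : B⦄, X ∈ U → ∀ ⦃Y : B⦄, Y ∈ V → ∀ δ : σ.Ext X Y, δ = 0
  resolve : ∀ X : B, ∃ (V₀ U₀ : B) (f : V₀ ⟶ U₀) (g : U₀ ⟶ X),
      V₀ ∈ V ∧ U₀ ∈ U ∧ σ.Conflation f g
  coresolve : ∀ X : B, ∃ (V₀ U₀ : B) (f : X ⟶ V₀) (g : V₀ ⟶ U₀),
      V₀ ∈ V ∧ U₀ ∈ U ∧ σ.Conflation f g

/-- A twin cotorsion pair `((S,T), (U,V))`. -/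
structure IsTwinCotorsionPair (S T U V : Set B) : Prop where
  fst : σ.IsCotorsionPair S T
  snd : σ.IsCotorsionPair U V
  ext_SV : ∀ ⦃X : B⦄, X ∈ S → ∀ ⦃Y : B⦄, Y ∈ V → ∀ δ : σ.Ext X Y, δ = 0

section Twin

variable (S T U V : Set B)

/-- `B⁺ = Cone(V, W)` for the core `W = T ∩ U` of a twin cotorsion pair. -/
def tPos : Set B := σ.Cone V (T ∩ U)

/-- `B⁻ = CoCone(W, S)` for the core `W = T ∩ U` of a twin cotorsion pair. -/
def tNeg : Set B := σ.CoCone (T ∩ U) S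

/-- The class of objects of the heart `H = B⁺ ∩ B⁻` of a twin cotorsion pair. -/
def tHeartSet : Set B := σ.tPos T U V ∩ σ.tNeg S T U

/-- The heart `H/W` of a twin cotorsion pair, as a full subcategory of the quotient
category `B/W`. -/
abbrev THeart := ObjectProperty.FullSubcategory (fun X : QuotCat (T ∩ U : Set B) => X.as ∈ σ.tHeartSet S T U V)


/-- A *reflection sequence* for `B₀`: a conflation `B₀ ↣ Z ↠ S₀` with `Z ∈ B⁺`, `S₀ ∈ S`,
such that `z^* : E(Z, V₀) → E(B₀, V₀)` is surjective for every `V₀ ∈ V`. -/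
def IsReflectionSeq {B₀ Z S₀ : B} (z : B₀ ⟶ Z) (w : Z ⟶ S₀) : Prop :=
  Z ∈ σ.tPos T U V ∧ S₀ ∈ S ∧ σ.Conflation z w ∧
    ∀ ⦃V₀ : B⦄, V₀ ∈ V → Function.Surjective (fun δ : σ.Ext Z V₀ => σ.pull z δ)

/-- A *coreflection sequence* for `B₀`: a conflation `V₀ ↣ X ↠ B₀` with `X ∈ B⁻`, `V₀ ∈ V`,
such that `x_* : E(S₀, X) → E(S₀, B₀)` is surjective for every `S₀ ∈ S`. -/
def IsCoreflectionSeq {V₀ X B₀ : B} (v : V₀ ⟶ X) (x : X ⟶ B₀) : Prop :=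
  X ∈ σ.tNeg S T U ∧ V₀ ∈ V ∧ σ.Conflation v x ∧
    ∀ ⦃S₀ : B⦄, S₀ ∈ S → Function.Surjective (fun δ : σ.Ext S₀ X => σ.push x δ)

end Twin

section Single

variable (U V : Set B)

/-- `B⁺` for a single cotorsion pair `(U,V)`, with core `W = U ∩ V`. -/
def sPos : Set B := σ.Cone V (U ∩ V)

/-- `B⁻` for a single cotorsion pair `(U,V)`, with core `W = U ∩ V`. -/
def sNeg : Set B := σ.CoCone (U ∩ V) U

/-- The class of objects of the heart of a single cotorsion pair. -/
def sHeartSet : Set B := σ.sPos U V ∩ σ.sNeg U V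

/-- The heart `H/W` of a cotorsion pair `(U,V)`, a full subcategory of `B/W`, `W = U ∩ V`. -/
abbrev SHeart := ObjectProperty.FullSubcategory (fun X : QuotCat (U ∩ V : Set B) => X.as ∈ σ.sHeartSet U V)

/-- The inclusion of the heart into the quotient category `B/W`. -/
abbrev sHeartIncl : σ.SHeart U V ⥤ QuotCat (U ∩ V : Set B) := ObjectProperty.ι _

/-- The kernel `K = add(U ∗ V)` of a cotorsion pair. -/
def kernelSet : Set B := σ.addStar U V

/-- The coheart `C = ⊥₁K` of a cotorsion pair. -/
def coheart : Set B := {X | ∀ ⦃K : B⦄, K ∈ σ.kernelSet U V → ∀ δ : σ.Ext X K, δ = 0}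


/-- An object of the heart determined by an object of `B` lying in `B⁺ ∩ B⁻`. -/
def sHeartObj {X : B} (hX : X ∈ σ.sHeartSet U V) : σ.SHeart U V :=
  ⟨(toQuot (U ∩ V : Set B)).obj X, hX⟩

/-- The image in the heart of a morphism of `B` between objects of `B⁺ ∩ B⁻`. -/
def sHeartHom {X Y : B} (hX : X ∈ σ.sHeartSet U V) (hY : Y ∈ σ.sHeartSet U V) (f : X ⟶ Y) :
    σ.sHeartObj U V hX ⟶ σ.sHeartObj U V hY :=
  ObjectProperty.homMk ((toQuot (U ∩ V : Set B)).map f)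

end Single

end ExtStruct

end ExtCat

section More

variable {B : Type u} [Category.{v} B] [Preadditive B] [HasFiniteBiproducts B]

namespace ExtStruct

variable (σ : ExtStruct B)

/-- `Ω D₀ = CoCone(P, D₀)`, the syzygy class of a class of objects `D₀`. -/
def omegaSet (D₀ : Set B) : Set B := σ.CoCone σ.projs D₀

/-- A choice of iterated syzygies of `X`: `Z 0 = X` and for each `i` there is a conflation
`Z (i+1) ↣ P ↠ Z i` with `P` projective. -/
def SyzygyChain (X : B) (Z : ℕ → B) : Prop :=
  Z 0 = X ∧ ∀ i : ℕ, ∃ (P : B) (f : Z (i + 1) ⟶ P) (g : P ⟶ Z i),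
    σ.IsProj P ∧ σ.Conflation f g

/-- A choice of iterated cosyzygies of `Y`: `Z 0 = Y` and for each `i` there is a conflation
`Z i ↣ I ↠ Z (i+1)` with `I` injective. -/
def CosyzygyChain (Y : B) (Z : ℕ → B) : Prop :=
  Z 0 = Y ∧ ∀ i : ℕ, ∃ (I : B) (f : Z i ⟶ I) (g : I ⟶ Z (i + 1)),
    σ.IsInj I ∧ σ.Conflation f g

/-- Vanishing of the higher extension group `E^{i+1}(X, Y) = E(X, Σ^i Y)`, expressed via
cosyzygy chains.  (`hExtVanish σ X Y 0` is the vanishing of `E(X,Y)` itself.) -/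
def hExtVanish (X Y : B) (i : ℕ) : Prop :=
  ∀ Z : ℕ → B, σ.CosyzygyChain Y Z → ∀ δ : σ.Ext X (Z i), δ = 0

/-- `Σ^j D₀`: the class of `j`-th cosyzygies of objects of `D₀`. -/
def sigmaSet (j : ℕ) (D₀ : Set B) : Set B :=
  {X | ∃ Y ∈ D₀, ∃ Z : ℕ → B, σ.CosyzygyChain Y Z ∧ Z j = X}

/-- An `n`-cluster tilting subcategory of an extriangulated category:
it is functorially finite, and `X ∈ M` iff `E^i(X, M) = 0` for `1 ≤ i ≤ n - 1`,
iff `E^i(M, X) = 0` for `1 ≤ i ≤ n - 1`. -/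
structure IsNClusterTilting (n : ℕ) (M : Set B) : Prop where
  contravariantly_finite : ∀ X : B, ∃ M₀ ∈ M, ∃ f : M₀ ⟶ X,
      ∀ M₁ ∈ M, ∀ g : M₁ ⟶ X, ∃ h : M₁ ⟶ M₀, h ≫ f = g
  covariantly_finite : ∀ X : B, ∃ M₀ ∈ M, ∃ f : X ⟶ M₀,
      ∀ M₁ ∈ M, ∀ g : X ⟶ M₁, ∃ h : M₀ ⟶ M₁, f ≫ h = g
  mem_iff_vanish_left : ∀ X : B,
      X ∈ M ↔ ∀ i : ℕ, i ≤ n - 2 → ∀ Y ∈ M, σ.hExtVanish X Y i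
  mem_iff_vanish_right : ∀ X : B,
      X ∈ M ↔ ∀ i : ℕ, i ≤ n - 2 → ∀ Y ∈ M, σ.hExtVanish Y X i

/-- `mlev σ M k` is the subcategory `M_{k+1}` of the paper: `M_1 = M` and
`M_{ℓ} = Cone(M_{ℓ-1}, M)`. -/
def mlev (M : Set B) : ℕ → Set B
  | 0 => M
  | (k + 1) => σ.Cone (mlev M k) M

end ExtStruct

section Reflectors

variable (W P N : Set B)

/-- The data of a reflection functor `σ⁺` onto the objects of `B⁺` (given by the class `P`),
i.e. a left adjoint of the inclusion of the full subcategory of `B/W` on `P` in the bijection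
formulation: composing with the unit `B → σ⁺B` gives bijections
`(σ⁺X ⟶ Y) ≃ (X ⟶ Y)` for all `Y` lying in `P`. -/
structure ReflectorData where
  σp : QuotCat W ⥤ QuotCat W
  mem : ∀ X : QuotCat W, (σp.obj X).as ∈ P
  unit : 𝟭 (QuotCat W) ⟶ σp
  bij : ∀ (X Y : QuotCat W), Y.as ∈ P →
      Function.Bijective (fun g : (σp.obj X ⟶ Y) => unit.app X ≫ g)

/-- The data of a coreflection functor `σ⁻` onto the objects of `B⁻` (given by the class `N`). -/
structure CoreflectorData where
  σm : QuotCat W ⥤ QuotCat W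
  mem : ∀ X : QuotCat W, (σm.obj X).as ∈ N
  counit : σm ⟶ 𝟭 (QuotCat W)
  bij : ∀ (X Y : QuotCat W), X.as ∈ N →
      Function.Bijective (fun g : (X ⟶ σm.obj Y) => g ≫ counit.app Y)

end Reflectors

namespace ExtStruct

variable (σ : ExtStruct B)

/-- The data of the cohomological functor `H = σ⁻ ∘ σ⁺ ∘ π : B → H` associated to a cotorsion
pair `(U, V)`: reflection and coreflection functors together with a functor `H` to the heart
which is isomorphic to `σ⁻ ∘ σ⁺ ∘ π` after composition with the inclusion of the heart. -/
structure HeartFunctorData (U V : Set B) where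
  refl : ReflectorData (B := B) (U ∩ V) (σ.sPos U V)
  corefl : CoreflectorData (B := B) (U ∩ V) (σ.sNeg U V)
  H : B ⥤ σ.SHeart U V
  iso : (H ⋙ σ.sHeartIncl U V) ≅ (toQuot (U ∩ V : Set B) ⋙ refl.σp ⋙ corefl.σm)

end ExtStruct

section Mod

variable (D : Type u₂) [Category.{v₂} D] [Preadditive D]

/-- A coherent (finitely presented) functor `Dᵒᵖ ⥤ Ab`: one admitting an exact presentation
`Hom(−,X) → Hom(−,Y) → F → 0`. -/
def IsCoherent (F : Dᵒᵖ ⥤ AddCommGrpCat.{v₂}) : Prop :=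
  ∃ (X Y : D) (f : X ⟶ Y) (η : preadditiveYoneda.obj Y ⟶ F),
    (∀ A : D, Function.Surjective (η.app (op A))) ∧
    (∀ (A : D) (g : A ⟶ Y), η.app (op A) g = 0 ↔ ∃ h : A ⟶ X, h ≫ f = g)

/-- `mod D`: the category of coherent functors `Dᵒᵖ ⥤ Ab`. -/
abbrev ModCat := ObjectProperty.FullSubcategory (fun F : Dᵒᵖ ⥤ AddCommGrpCat.{v₂} => IsCoherent D F)

end Mod

/-- The additive quotient `C/P` of the full subcategory of `B` on a class `C₀` of objects by
(the ideal of) morphisms factoring through objects satisfying `P₀`. -/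
abbrev StableCat (C₀ P₀ : Set B) :=
  QuotCat (D := ObjectProperty.FullSubcategory (fun X : B => X ∈ C₀)) {Z | Z.obj ∈ P₀}

end More

/-! The object `B⁺` lies in `Cone(V, W)` through `V_B ↣ T^U ↠ B⁺`, because `T^U` is an
extension of `U_B ∈ U` by `S^U ∈ S ⊆ U`.  The real point is that `pB^*` hits all of `E(B₀, V)`.
Let `ρ` be the extension realized by `V_B ↣ T^U ↠ B⁺`.  Axiom (ET4)ᵒᵖ applied to it and to
`B₀ ↣ B⁺ ↠ S^U` realizes `pB^* ρ` by a conflation `V_B ↣ E ↠ B₀` whose first term `E` is,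
like `U_B`, a cocone of the deflation `T^U ↠ S^U`; hence `E` is a direct summand of `U_B` and lies in `U`.  So `E(E, V) = 0`, and the long exact sequence of
`V_B ↣ E ↠ B₀` writes every extension of `B₀` by an object of `V` as a pushout of `pB^* ρ`,
that is, as a pullback along `pB`.  The coreflection sequence is dual. -/

namespace PreExtStruct

variable {B : Type u} [Category.{v} B] [Preadditive B] (σ : PreExtStruct B)

@[simp] lemma push_id {C A : B} (δ : σ.Ext C A) : σ.push (𝟙 A) δ = δ := by
  simp [push]

@[simp] lemma pull_id {C A : B} (δ : σ.Ext C A) : σ.pull (𝟙 C) δ = δ := by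
  simp [pull]

lemma push_comp {C A A' A'' : B} (a : A ⟶ A') (a' : A' ⟶ A'') (δ : σ.Ext C A) :
    σ.push (a ≫ a') δ = σ.push a' (σ.push a δ) := by
  simp [push]

lemma pull_comp {C'' C' C A : B} (c' : C'' ⟶ C') (c : C' ⟶ C) (δ : σ.Ext C A) :
    σ.pull (c' ≫ c) δ = σ.pull c' (σ.pull c δ) := by
  simp [pull]

lemma pull_push {C' C A A' : B} (c : C' ⟶ C) (a : A ⟶ A') (δ : σ.Ext C A) :
    σ.pull c (σ.push a δ) = σ.push a (σ.pull c δ) :=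
  congrArg (fun φ => φ δ) ((σ.E.map c.op).naturality a)

@[simp] lemma push_zero {C A A' : B} (a : A ⟶ A') : σ.push a (0 : σ.Ext C A) = 0 :=
  map_zero _

@[simp] lemma pull_zero {C' C A : B} (c : C' ⟶ C) : σ.pull c (0 : σ.Ext C A) = 0 :=
  map_zero _

end PreExtStruct

namespace ExtStruct

open PreExtStruct ZeroObject

variable {B : Type u} [Category.{v} B] [Preadditive B] [HasFiniteBiproducts B] {σ : ExtStruct B}

lemma push_sub {C A A' : B} (a a' : A ⟶ A') (δ : σ.Ext C A) :
    σ.push (a - a') δ = σ.push a δ - σ.push a' δ := by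
  have := σ.additive_fst (op C)
  show ((σ.E.obj (op C)).map (a - a')) δ = _
  rw [Functor.map_sub]
  rfl

lemma pull_sub {C' C A : B} (c c' : C' ⟶ C) (δ : σ.Ext C A) :
    σ.pull (c - c') δ = σ.pull c δ - σ.pull c' δ := by
  have := σ.additive_snd A
  show ((σ.E.flip.obj A).map (c - c').op) δ = _
  rw [op_sub, Functor.map_sub]
  rfl

lemma realize_zero_splits {A X C : B} {f : A ⟶ X} {g : X ⟶ C}
    (h : σ.realize (0 : σ.Ext C A) f g) :
    (∃ r : X ⟶ A, f ≫ r = 𝟙 A) ∧ (∃ s : C ⟶ X, s ≫ g = 𝟙 C) := by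
  obtain ⟨b, hb₁, hb₂⟩ := σ.realize_unique (0 : σ.Ext C A) biprod.inl biprod.snd f g
    (σ.realize_zero A C) h
  refine ⟨⟨b.inv ≫ biprod.fst, ?_⟩, ⟨biprod.inr ≫ b.hom, by simp [hb₂]⟩⟩
  rw [← hb₁]
  simp

lemma realize_comp_eq_zero {A X C : B} {δ : σ.Ext C A} {f : A ⟶ X} {g : X ⟶ C}
    (h : σ.realize δ f g) : f ≫ g = 0 := by
  obtain ⟨c, -, hc⟩ := σ.et3 (0 : σ.Ext X A) δ biprod.inl biprod.snd f g
    (σ.realize_zero A X) h (𝟙 A) (biprod.desc f (𝟙 X)) (by simp)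
  simpa using (congrArg (biprod.inl ≫ ·) hc).symm

lemma realize_zero_zero_id (C : B) : σ.realize (0 : σ.Ext C (0 : B)) 0 (𝟙 C) := by
  simpa using σ.realize_iso _ _ _
    { hom := biprod.snd
      inv := biprod.inr
      hom_inv_id := biprod.hom_ext _ _ ((isZero_zero B).eq_of_tgt _ _) (by simp) }
    (σ.realize_zero (0 : B) C)

lemma realize_zero_id_zero (A : B) : σ.realize (0 : σ.Ext (0 : B) A) (𝟙 A) 0 := by
  simpa using σ.realize_iso _ _ _
    { hom := biprod.fst
      inv := biprod.inl
      hom_inv_id := biprod.hom_ext _ _ (by simp) ((isZero_zero B).eq_of_tgt _ _) }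
    (σ.realize_zero A (0 : B))

lemma exists_desc_of_inflation_comp_eq_zero {A X C Y : B} {δ : σ.Ext C A} {f : A ⟶ X}
    {g : X ⟶ C} (h : σ.realize δ f g) {w : X ⟶ Y} (hw : f ≫ w = 0) :
    ∃ w' : C ⟶ Y, g ≫ w' = w := by
  obtain ⟨c, -, hc⟩ := σ.et3 δ (0 : σ.Ext Y 0) f g 0 (𝟙 Y) h
    (realize_zero_zero_id Y) 0 w (by simp [hw])
  exact ⟨c, by simpa using hc⟩

lemma exists_lift_of_comp_deflation_eq_zero {A X C Z : B} {δ : σ.Ext C A} {f : A ⟶ X}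
    {g : X ⟶ C} (h : σ.realize δ f g) {n : Z ⟶ X} (hn : n ≫ g = 0) :
    ∃ m : Z ⟶ A, m ≫ f = n := by
  obtain ⟨a, -, ha⟩ := σ.et3op (0 : σ.Ext 0 Z) δ (𝟙 Z) 0 f g
    (realize_zero_id_zero Z) h n 0 (by simp [hn])
  exact ⟨a, by simpa using ha.symm⟩

lemma exists_lift_of_pull_eq_zero {A X C Z : B} {δ : σ.Ext C A} {f : A ⟶ X} {g : X ⟶ C}
    (h : σ.realize δ f g) {w : Z ⟶ C} (hw : σ.pull w δ = 0) :
    ∃ l : Z ⟶ X, l ≫ g = w := by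
  obtain ⟨b, -, hb⟩ := σ.realize_map (0 : σ.Ext Z A) δ biprod.inl biprod.snd f g
    (𝟙 A) w (σ.realize_zero A Z) h (by simp [hw])
  exact ⟨biprod.inr ≫ b, by simpa using (congrArg (biprod.inr ≫ ·) hb).symm⟩

lemma exists_extend_of_push_eq_zero {A X C Y : B} {δ : σ.Ext C A} {f : A ⟶ X} {g : X ⟶ C}
    (h : σ.realize δ f g) {t : A ⟶ Y} (ht : σ.push t δ = 0) :
    ∃ e : X ⟶ Y, f ≫ e = t := by
  obtain ⟨b, hb, -⟩ := σ.realize_map δ (0 : σ.Ext C Y) f g biprod.inl biprod.snd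
    t (𝟙 C) h (σ.realize_zero Y C) (by simp [ht])
  exact ⟨b ≫ biprod.fst, by simpa using congrArg (· ≫ biprod.fst) hb⟩

lemma exists_push_eq_of_pull_deflation_eq_zero {A X C Y : B} {δ : σ.Ext C A} {f : A ⟶ X}
    {g : X ⟶ C} (h : σ.realize δ f g) {ξ : σ.Ext C Y} (hξ : σ.pull g ξ = 0) :
    ∃ e : A ⟶ Y, σ.push e δ = ξ := by
  obtain ⟨M, x, y, hr⟩ := σ.realize_ex ξ
  obtain ⟨l, hl⟩ := exists_lift_of_pull_eq_zero hr hξ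
  obtain ⟨a, ha, -⟩ := σ.et3op δ ξ f g x y h hr l (𝟙 C) (by simp [hl])
  exact ⟨a, by simpa using ha⟩

lemma exists_pull_eq_of_push_inflation_eq_zero {A X C Z : B} {δ : σ.Ext C A} {f : A ⟶ X}
    {g : X ⟶ C} (h : σ.realize δ f g) {ξ : σ.Ext Z A} (hξ : σ.push f ξ = 0) :
    ∃ s : Z ⟶ C, σ.pull s δ = ξ := by
  obtain ⟨N, x, y, hr⟩ := σ.realize_ex ξ
  obtain ⟨e, he⟩ := exists_extend_of_push_eq_zero hr hξ
  obtain ⟨s, hs, -⟩ := σ.et3 ξ δ x y f g hr h (𝟙 A) e (by simp [he])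
  exact ⟨s, by simpa using hs.symm⟩

lemma exists_pull_eq_of_pull_inflation_eq_zero {A X C Y : B} {δ : σ.Ext C A} {f : A ⟶ X}
    {g : X ⟶ C} (h : σ.realize δ f g) {ξ : σ.Ext X Y} (hξ : σ.pull f ξ = 0) :
    ∃ η : σ.Ext C Y, σ.pull g η = ξ := by
  obtain ⟨M, x, y, hr⟩ := σ.realize_ex ξ
  obtain ⟨_, _, _, _, δ'', -, -, -, he, -, hpull⟩ := σ.et4op ξ x y δ f g hr h
  rw [hξ] at he
  obtain ⟨⟨r, hr⟩, -⟩ := realize_zero_splits he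
  refine ⟨σ.push r δ'', ?_⟩
  rw [pull_push, hpull, ← push_comp, hr, push_id]

lemma exists_push_eq_of_push_deflation_eq_zero {A X C Z : B} {δ : σ.Ext C A} {f : A ⟶ X}
    {g : X ⟶ C} (h : σ.realize δ f g) {ξ : σ.Ext Z X} (hξ : σ.push g ξ = 0) :
    ∃ ζ : σ.Ext Z A, σ.push f ζ = ξ := by
  obtain ⟨M, x, y, hr⟩ := σ.realize_ex ξ
  obtain ⟨_, _, _, _, δ'', -, -, -, hd, -, hpush⟩ := σ.et4 δ f g ξ x y h hr
  rw [hξ] at hd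
  obtain ⟨-, ⟨s, hs⟩⟩ := realize_zero_splits hd
  refine ⟨σ.pull s δ'', ?_⟩
  rw [← pull_push, hpush, ← pull_comp, hs, pull_id]

lemma comp_self_eq_zero_of_comp_inflation_eq_zero {A X C : B} {δ : σ.Ext C A} {f : A ⟶ X}
    {g : X ⟶ C} (h : σ.realize δ f g) {n : A ⟶ A} (hnf : n ≫ f = 0)
    (hnδ : σ.push n δ = 0) : n ≫ n = 0 := by
  obtain ⟨e, rfl⟩ := exists_extend_of_push_eq_zero h hnδ
  obtain ⟨w, hw⟩ := exists_desc_of_inflation_comp_eq_zero h (w := e ≫ f)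
    (by simpa using hnf)
  calc (f ≫ e) ≫ f ≫ e = f ≫ (e ≫ f) ≫ e := by simp only [Category.assoc]
    _ = (f ≫ g) ≫ w ≫ e := by rw [← hw]; simp only [Category.assoc]
    _ = 0 := by rw [realize_comp_eq_zero h, zero_comp]

lemma comp_self_eq_zero_of_deflation_comp_eq_zero {A X C : B} {δ : σ.Ext C A} {f : A ⟶ X}
    {g : X ⟶ C} (h : σ.realize δ f g) {n : C ⟶ C} (hgn : g ≫ n = 0)
    (hnδ : σ.pull n δ = 0) : n ≫ n = 0 := by
  obtain ⟨l, rfl⟩ := exists_lift_of_pull_eq_zero h hnδ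
  obtain ⟨m, hm⟩ := exists_lift_of_comp_deflation_eq_zero h (n := g ≫ l)
    (by simpa using hgn)
  calc (l ≫ g) ≫ l ≫ g = l ≫ (g ≫ l) ≫ g := by simp only [Category.assoc]
    _ = l ≫ m ≫ f ≫ g := by rw [← hm]; simp only [Category.assoc]
    _ = 0 := by rw [realize_comp_eq_zero h, comp_zero, comp_zero]

lemma exists_retraction_of_realize_of_deflation_eq {A A' X C : B} {δ : σ.Ext C A}
    {δ' : σ.Ext C A'} {f : A ⟶ X} {f' : A' ⟶ X} {g : X ⟶ C} (h : σ.realize δ f g)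
    (h' : σ.realize δ' f' g) : ∃ (s : A ⟶ A') (r : A' ⟶ A), s ≫ r = 𝟙 A := by
  -- `s ≫ r = 𝟙 - n` with `n ≫ n = 0`, so `s ≫ r` is invertible with inverse `𝟙 + n`.
  obtain ⟨s, hsδ, hsf⟩ := σ.et3op δ δ' f g f' g h h' (𝟙 X) (𝟙 C) (by simp)
  obtain ⟨r, hrδ, hrf⟩ := σ.et3op δ' δ f' g f g h' h (𝟙 X) (𝟙 C) (by simp)
  have hn : (𝟙 A - s ≫ r) ≫ (𝟙 A - s ≫ r) = 0 := by
    refine comp_self_eq_zero_of_comp_inflation_eq_zero h ?_ ?_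
    · simp only [Category.comp_id] at hsf hrf
      simp [Preadditive.sub_comp, ← hrf, ← hsf]
    · simp only [pull_id] at hsδ hrδ
      rw [push_sub, push_id, push_comp, hsδ, hrδ, sub_self]
  generalize hn_def : 𝟙 A - s ≫ r = n at hn
  have hsr : s ≫ r = 𝟙 A - n := by rw [← hn_def, sub_sub_cancel]
  refine ⟨s, r ≫ (𝟙 A + n), ?_⟩
  rw [← Category.assoc, hsr]
  simp only [Preadditive.sub_comp, Preadditive.comp_add, Category.id_comp, Category.comp_id, hn]
  abel

lemma exists_retraction_of_realize_of_inflation_eq {A X C C' : B} {δ : σ.Ext C A}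
    {δ' : σ.Ext C' A} {f : A ⟶ X} {g : X ⟶ C} {g' : X ⟶ C'} (h : σ.realize δ f g)
    (h' : σ.realize δ' f g') : ∃ (s : C ⟶ C') (r : C' ⟶ C), s ≫ r = 𝟙 C := by
  obtain ⟨s, hsδ, hsg⟩ := σ.et3 δ δ' f g f g' h h' (𝟙 A) (𝟙 X) (by simp)
  obtain ⟨r, hrδ, hrg⟩ := σ.et3 δ' δ f g' f g h' h (𝟙 A) (𝟙 X) (by simp)
  have hn : (𝟙 C - s ≫ r) ≫ (𝟙 C - s ≫ r) = 0 := by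
    refine comp_self_eq_zero_of_deflation_comp_eq_zero h ?_ ?_
    · simp only [Category.id_comp] at hsg hrg
      simp [Preadditive.comp_sub, reassoc_of% hsg, hrg]
    · simp only [push_id] at hsδ hrδ
      rw [pull_sub, pull_id, pull_comp, ← hrδ, ← hsδ, sub_self]
  generalize hn_def : 𝟙 C - s ≫ r = n at hn
  have hsr : s ≫ r = 𝟙 C - n := by rw [← hn_def, sub_sub_cancel]
  refine ⟨s, r ≫ (𝟙 C + n), ?_⟩
  rw [← Category.assoc, hsr]
  simp only [Preadditive.sub_comp, Preadditive.comp_add, Category.id_comp, Category.comp_id, hn]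
  abel

lemma ext_eq_zero_of_conflation_left {A X C Y : B} {f : A ⟶ X} {g : X ⟶ C}
    (h : σ.Conflation f g) (hA : ∀ α : σ.Ext A Y, α = 0) (hC : ∀ γ : σ.Ext C Y, γ = 0)
    (ξ : σ.Ext X Y) : ξ = 0 := by
  obtain ⟨δ, h⟩ := h
  obtain ⟨η, rfl⟩ := exists_pull_eq_of_pull_inflation_eq_zero h (hA (σ.pull f ξ))
  rw [hC η, pull_zero]

lemma ext_eq_zero_of_conflation_right {A X C Z : B} {f : A ⟶ X} {g : X ⟶ C}
    (h : σ.Conflation f g) (hA : ∀ α : σ.Ext Z A, α = 0) (hC : ∀ γ : σ.Ext Z C, γ = 0)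
    (ξ : σ.Ext Z X) : ξ = 0 := by
  obtain ⟨δ, h⟩ := h
  obtain ⟨ζ, rfl⟩ := exists_push_eq_of_push_deflation_eq_zero h (hC (σ.push g ξ))
  rw [hA ζ, push_zero]

namespace IsCotorsionPair

variable {U V : Set B} (hp : σ.IsCotorsionPair U V)
include hp

lemma mem_left_of_ext_eq_zero {X : B} (hX : ∀ ⦃Y : B⦄, Y ∈ V → ∀ δ : σ.Ext X Y, δ = 0) :
    X ∈ U := by
  obtain ⟨V₀, U₀, f, g, hV₀, hU₀, δ, h⟩ := hp.resolve X
  rw [hX hV₀ δ] at h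
  obtain ⟨-, ⟨s, hs⟩⟩ := realize_zero_splits h
  exact hp.addU.summand_mem X U₀ hU₀ s g hs

lemma mem_right_of_ext_eq_zero {Y : B} (hY : ∀ ⦃X : B⦄, X ∈ U → ∀ δ : σ.Ext X Y, δ = 0) :
    Y ∈ V := by
  obtain ⟨V₀, U₀, f, g, hV₀, hU₀, δ, h⟩ := hp.coresolve Y
  rw [hY hU₀ δ] at h
  obtain ⟨⟨r, hr⟩, -⟩ := realize_zero_splits h
  exact hp.addV.summand_mem Y V₀ hV₀ f r hr

end IsCotorsionPair

namespace IsTwinCotorsionPair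

variable {S T U V : Set B} (twin : σ.IsTwinCotorsionPair S T U V)
include twin

lemma mem_U_of_conflation {A X C : B} {f : A ⟶ X} {g : X ⟶ C} (h : σ.Conflation f g)
    (hA : A ∈ U) (hC : C ∈ S) : X ∈ U :=
  twin.snd.mem_left_of_ext_eq_zero fun _ hY =>
    ext_eq_zero_of_conflation_left h (twin.snd.ext_vanish hA hY) (twin.ext_SV hC hY)

lemma mem_T_of_conflation {A X C : B} {f : A ⟶ X} {g : X ⟶ C} (h : σ.Conflation f g)
    (hA : A ∈ V) (hC : C ∈ T) : X ∈ T :=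
  twin.fst.mem_right_of_ext_eq_zero fun _ hZ =>
    ext_eq_zero_of_conflation_right h (twin.ext_SV hZ hA) (twin.fst.ext_vanish hZ hC)

lemma isReflectionSeq {VB UB B₀ TU SU Bp : B} {u : UB ⟶ TU} {t'' : TU ⟶ SU} {i : VB ⟶ TU}
    {t : TU ⟶ Bp} {pB : B₀ ⟶ Bp} {q : Bp ⟶ SU} (hVB : VB ∈ V) (hUB : UB ∈ U) (hTU : TU ∈ T)
    (hSU : SU ∈ S) (hu : σ.Conflation u t'') (hi : σ.Conflation i t)
    (hpB : σ.Conflation pB q) (htq : t ≫ q = t'') : σ.IsReflectionSeq S T U V pB q := by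
  obtain ⟨φ, hφ⟩ := hu
  obtain ⟨ρ, hρ⟩ := hi
  obtain ⟨π, hπ⟩ := hpB
  obtain ⟨E₀, _, d, _, _, -, -, hm, hed, -, -⟩ := σ.et4op ρ i t π pB q hρ hπ
  rw [htq] at hm
  have hE₀ : E₀ ∈ U := by
    obtain ⟨s, r, hsr⟩ := exists_retraction_of_realize_of_deflation_eq hm hφ
    exact twin.snd.addU.summand_mem E₀ UB hUB s r hsr
  have hTU' : TU ∈ U := twin.mem_U_of_conflation ⟨φ, hφ⟩ hUB hSU
  refine ⟨⟨VB, TU, i, t, hVB, ⟨hTU, hTU'⟩, ρ, hρ⟩, hSU, ⟨π, hπ⟩, fun V₀ hV₀ ε => ?_⟩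
  obtain ⟨a, ha⟩ :=
    exists_push_eq_of_pull_deflation_eq_zero hed (twin.snd.ext_vanish hE₀ hV₀ (σ.pull d ε))
  exact ⟨σ.push a ρ, by rw [← ha, ← pull_push]⟩

lemma isCoreflectionSeq {VT UT B₀ TB SB Bm : B} {vt : VT ⟶ UT} {w : UT ⟶ TB} {nt : Bm ⟶ UT}
    {s : UT ⟶ SB} {vm : VT ⟶ Bm} {mB : Bm ⟶ B₀} (hVT : VT ∈ V) (hUT : UT ∈ U) (hTB : TB ∈ T)
    (hSB : SB ∈ S) (hv : σ.Conflation vt w) (hn : σ.Conflation nt s)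
    (hmB : σ.Conflation vm mB) (hvn : vm ≫ nt = vt) : σ.IsCoreflectionSeq S T U V vm mB := by
  obtain ⟨ω, hω⟩ := hv
  obtain ⟨ρ, hρ⟩ := hn
  obtain ⟨π, hπ⟩ := hmB
  obtain ⟨E₂, d, _, _, _, -, -, hh', hde, -, -⟩ := σ.et4 π vm mB ρ nt s hπ hρ
  rw [hvn] at hh'
  have hE₂ : E₂ ∈ T := by
    obtain ⟨i, r, hir⟩ := exists_retraction_of_realize_of_inflation_eq hh' hω
    exact twin.fst.addV.summand_mem E₂ TB hTB i r hir
  have hUT' : UT ∈ T := twin.mem_T_of_conflation ⟨ω, hω⟩ hVT hTB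
  refine ⟨⟨UT, SB, nt, s, ⟨hUT', hUT⟩, hSB, ρ, hρ⟩, hVT, ⟨π, hπ⟩, fun S₀ hS₀ ε => ?_⟩
  obtain ⟨c, hc⟩ :=
    exists_pull_eq_of_push_inflation_eq_zero hde (twin.fst.ext_vanish hS₀ hE₂ (σ.push d ε))
  exact ⟨σ.pull c ρ, by rw [← hc, pull_push]⟩

end IsTwinCotorsionPair

end ExtStruct

/-- Definition 2.15 and Proposition 2.16 / `Prop+isRef`.
(a) Given conflations `V_B ↣ U_B ↠ B₀` (`V_B ∈ V`, `U_B ∈ U`) and `U_B ↣ T^U ↠ S^U`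
(`T^U ∈ T`, `S^U ∈ S`), the commutative (ET4)-diagram, consisting moreover of the
conflations `V_B ↣ T^U ↠ B⁺` and `B₀ --p_B--> B⁺ ↠ S^U`, exhibits
`B₀ ↣ B⁺ ↠ S^U` as a reflection sequence for `B₀`.
(b) Dually, the conflation `V_T ↣ B⁻ ↠ B₀` produced by (ET4)ᵒᵖ from conflations
`B₀ ↣ T^B ↠ S^B` and `V_T ↣ U_T ↠ T^B` is a coreflection sequence for `B₀`. -/
theorem statement_3 {B : Type u} [Category.{v} B] [Preadditive B] [HasFiniteBiproducts B]
    (σ : ExtStruct B) {S T U V : Set B} (twin : σ.IsTwinCotorsionPair S T U V) :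
    (∀ ⦃VB UB B₀ TU SU Bp : B⦄
      (v : VB ⟶ UB) (uB : UB ⟶ B₀) (u : UB ⟶ TU) (t'' : TU ⟶ SU)
      (t : TU ⟶ Bp) (pB : B₀ ⟶ Bp) (q : Bp ⟶ SU),
      VB ∈ V → UB ∈ U → TU ∈ T → SU ∈ S →
      σ.Conflation v uB → σ.Conflation u t'' → σ.Conflation (v ≫ u) t →
      σ.Conflation pB q →
      uB ≫ pB = u ≫ t → t ≫ q = t'' →
      σ.IsReflectionSeq S T U V pB q) ∧
    (∀ ⦃VT UT B₀ TB SB Bm : B⦄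
      (tB : B₀ ⟶ TB) (sB : TB ⟶ SB) (vt : VT ⟶ UT) (wt : UT ⟶ TB)
      (vm : VT ⟶ Bm) (mB : Bm ⟶ B₀) (nt : Bm ⟶ UT),
      VT ∈ V → UT ∈ U → TB ∈ T → SB ∈ S →
      σ.Conflation tB sB → σ.Conflation vt wt → σ.Conflation nt (wt ≫ sB) →
      σ.Conflation vm mB →
      nt ≫ wt = mB ≫ tB → vm ≫ nt = vt →
      σ.IsCoreflectionSeq S T U V vm mB) := by
  exact ⟨fun _ _ _ _ _ _ _ _ _ _ _ _ _ hVB hUB hTU hSU _ hu hi hpB _ htq =>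
      twin.isReflectionSeq hVB hUB hTU hSU hu hi hpB htq,
    fun _ _ _ _ _ _ _ _ _ _ _ _ _ hVT hUT hTB hSB _ hv hn hmB _ hvn =>
      twin.isCoreflectionSeq hVT hUT hTB hSB hv hn hmB hvn⟩

end ExtriHearts
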